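/- Let N ≥ 2 be an even integer and ν ∈ ℂ with |ν| ≤ N. Define ψ = e^{i(arg ν + arccos(|ν|/N))} for ν ≠ 0 (and ψ = e^{i arccos 0} = i for ν = 0), and for n = 1,…,N set θ_n = ψ if n is even and θ_n = 2ν/N − ψ if n is odd. Then |θ_n| = 1 for all n and Σ_{n=1}^N θ_n = ν. -/

import Mathlib

/-! With `φ = arccos (‖ν‖ / N)`, the unit vectors `exp (i (arg ν ± φ))` add up to
`2 cos φ · exp (i arg ν) = 2ν / N`. So `θ` alternates between these two unit vectors, and each
of the `N / 2` consecutive pairs contributes `2ν / N` to the sum. -/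

open Complex

theorem Complex.exp_add_mul_I_add_exp_sub_mul_I (α φ : ℂ) :
    exp ((α + φ) * I) + exp ((α - φ) * I) = 2 * cos φ * exp (α * I) := by
  rw [two_cos, add_mul, add_mul, sub_mul, sub_eq_add_neg, ← neg_mul, exp_add, exp_add]
  ring

theorem Complex.two_mul_div_eq_exp_add_exp {c : ℝ} (ν : ℂ) (hν : ‖ν‖ ≤ c) :
    2 * ν / c = exp (((ν.arg + Real.arccos (‖ν‖ / c) : ℝ) : ℂ) * I)
      + exp (((ν.arg - Real.arccos (‖ν‖ / c) : ℝ) : ℂ) * I) := by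
  have hcos : Real.cos (Real.arccos (‖ν‖ / c)) = ‖ν‖ / c := by
    have h0 : 0 ≤ ‖ν‖ / c := div_nonneg (norm_nonneg ν) ((norm_nonneg ν).trans hν)
    exact Real.cos_arccos (by linarith) (div_le_one_of_le₀ hν ((norm_nonneg ν).trans hν))
  push_cast
  rw [exp_add_mul_I_add_exp_sub_mul_I, ← ofReal_cos, hcos]
  conv_lhs => rw [← norm_mul_exp_arg_mul_I ν]
  push_cast
  ring

theorem Finset.sum_range_two_mul_ite_odd {M : Type*} [AddCommMonoid M] (a b : M) (m : ℕ) :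
    ∑ n ∈ range (2 * m), (if Odd n then a else b) = m • (a + b) := by
  induction m with
  | zero => simp
  | succ k ih =>
    rw [show 2 * (k + 1) = 2 * k + 1 + 1 by ring, sum_range_succ, sum_range_succ, ih,
      if_pos (odd_two_mul_add_one k), if_neg (Nat.not_odd_iff_even.mpr (even_two_mul k)),
      succ_nsmul, add_assoc, add_comm b a]

theorem even_case_unit_decomposition_general (N : ℕ) (hEven : Even N)
    (ν : ℂ) (hν : ‖ν‖ ≤ N)
    (ψ : ℂ)
    (hψ : ψ = Complex.exp (Complex.I * ((ν.arg + Real.arccos (‖ν‖ / N) : ℝ) : ℂ)))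
    (θ : Fin N → ℂ)
    (hθ : ∀ n : Fin N, θ n = if Odd (n : ℕ) then ψ else 2 * ν / (N : ℂ) - ψ) :
    (∀ n, ‖θ n‖ = 1) ∧ ∑ n, θ n = ν := by
  rw [mul_comm] at hψ
  have hpartner : 2 * ν / (N : ℂ) - ψ =
      exp (((ν.arg - Real.arccos (‖ν‖ / N) : ℝ) : ℂ) * I) := by
    rw [hψ, ← ofReal_natCast, two_mul_div_eq_exp_add_exp ν hν, add_sub_cancel_left]
  refine ⟨fun n => ?_, ?_⟩
  · rw [hθ n]
    split_ifs
    · rw [hψ, norm_exp_ofReal_mul_I]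
    · rw [hpartner, norm_exp_ofReal_mul_I]
  · obtain ⟨m, hm⟩ := hEven.two_dvd
    have hsum : ∑ n ∈ Finset.range N, (if Odd n then ψ else 2 * ν / (N : ℂ) - ψ)
        = m • (2 * ν / (N : ℂ)) := by
      nth_rw 1 [hm]
      rw [Finset.sum_range_two_mul_ite_odd, add_sub_cancel]
    simp_rw [hθ]
    rw [Fin.sum_univ_eq_sum_range (fun n => if Odd n then ψ else 2 * ν / (N : ℂ) - ψ), hsum,
      nsmul_eq_mul]
    subst hm
    rcases eq_or_ne m 0 with rfl | hm
    · simpa [eq_comm] using hν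
    push_cast
    field_simp

theorem even_case_unit_decomposition (N : ℕ) (hN : 0 < N) (hEven : Even N)
    (ν : ℂ) (hν : ‖ν‖ ≤ N)
    (ψ : ℂ)
    (hψ : ψ = Complex.exp (Complex.I * ((ν.arg + Real.arccos (‖ν‖ / N) : ℝ) : ℂ)))
    (θ : Fin N → ℂ)
    (hθ : ∀ n : Fin N, θ n = if Odd (n : ℕ) then ψ else 2 * ν / (N : ℂ) - ψ) :
    (∀ n, ‖θ n‖ = 1) ∧ ∑ n, θ n = ν :=
  even_case_unit_decomposition_general N hEven ν hν ψ hψ θ hθ
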